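/- arXiv:2504.04521 — 4 statements merged into one kernel-verified Lean document; each statement's English description precedes it below -/
import Mathlib

section
/- For all real numbers a, b with 0 < a, 0 < b and a + b ≤ 1, the Ramanujan constant R(a,b) = -ψ(a) - ψ(b) - 2γ satisfies R(a,b) ≥ 4·ln 2 > 2, where ψ is the digamma function and γ is the Euler–Mascheroni constant. -/
noncomputable def digamma (x : ℝ) : ℝ := deriv (fun y : ℝ => Real.log (Real.Gamma y)) x

noncomputable def RamanujanR (a b : ℝ) : ℝ :=
  -digamma a - digamma b - 2 * Real.eulerMascheroniConstant

/-!
Since `log Γ` is convex, `ψ` is nondecreasing on `(0, ∞)`. By the recurrence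
`ψ(x + 1) = ψ(x) + 1/x` and the harmonic–arithmetic mean inequality, the quantity
`ψ(x) + ψ(y) - 2ψ(z)` can only grow when `x, y, z` are shifted by `1`, provided `x + y ≤ 2z`.
Shifting by `n` and using monotonicity bounds it by `2/(z + n) → 0`, so
`ψ(a) + ψ(b) ≤ 2ψ(1/2) = -2γ - 4 log 2` whenever `a + b ≤ 1`.
-/

open Real Set Filter Topology

lemma differentiableAt_log_Gamma {x : ℝ} (hx : 0 < x) :
    DifferentiableAt ℝ (fun y : ℝ => log (Gamma y)) x :=
  (differentiableAt_Gamma fun m => by linarith [Nat.cast_nonneg (α := ℝ) m]).log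
    (Gamma_pos_of_pos hx).ne'

lemma digamma_le_digamma {x y : ℝ} (hx : 0 < x) (hxy : x ≤ y) : digamma x ≤ digamma y := by
  have hconvex : ConvexOn ℝ (Ioi 0) fun y : ℝ => log (Gamma y) := by
    simpa [Function.comp_def] using convexOn_log_Gamma
  exact hconvex.monotoneOn_deriv (fun z hz => differentiableAt_log_Gamma hz) hx
    (hx.trans_le hxy) hxy

lemma digamma_add_one {x : ℝ} (hx : 0 < x) : digamma (x + 1) = digamma x + 1 / x := by
  have hshift : HasDerivAt (fun y : ℝ => log (Gamma (y + 1))) (digamma (x + 1)) x :=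
    (differentiableAt_log_Gamma (by linarith)).hasDerivAt.comp_add_const x 1
  have hsum : HasDerivAt (fun y : ℝ => log (Gamma y) + log y) (digamma x + 1 / x) x := by
    rw [one_div]
    exact (differentiableAt_log_Gamma hx).hasDerivAt.add (hasDerivAt_log hx.ne')
  have hfun : (fun y : ℝ => log (Gamma y) + log y) =ᶠ[𝓝 x] fun y => log (Gamma (y + 1)) := by
    filter_upwards [eventually_gt_nhds hx] with y hy
    rw [Gamma_add_one hy.ne', log_mul hy.ne' (Gamma_pos_of_pos hy).ne', add_comm]
  exact hshift.unique (hsum.congr_of_eventuallyEq hfun.symm)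

lemma digamma_one_half : digamma (1 / 2) = -(eulerMascheroniConstant + 2 * log 2) := by
  have hΓ : Gamma (1 / 2) ≠ 0 := (Gamma_pos_of_pos (by norm_num)).ne'
  rw [digamma, (hasDerivAt_Gamma_one_half.log hΓ).deriv, Gamma_one_half_eq]
  field_simp [(sqrt_pos.mpr pi_pos).ne']

lemma two_div_le_one_div_add_one_div {u v w : ℝ} (hu : 0 < u) (hv : 0 < v) (hw : 0 < w)
    (h : u + v ≤ 2 * w) : 2 / w ≤ 1 / u + 1 / v := by
  rw [div_add_div _ _ hu.ne' hv.ne', div_le_div_iff₀ hw (mul_pos hu hv)]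
  nlinarith [sq_nonneg (u - v)]

lemma digamma_add_digamma_sub_le_add_nat {x y z : ℝ} (hx : 0 < x) (hy : 0 < y)
    (hxyz : x + y ≤ 2 * z) (n : ℕ) :
    digamma x + digamma y - 2 * digamma z ≤
      digamma (x + n) + digamma (y + n) - 2 * digamma (z + n) := by
  induction n with
  | zero => simp
  | succ n ih =>
    have hz : 0 < z + n := by linarith [Nat.cast_nonneg (α := ℝ) n]
    have hmean : 2 / (z + n) ≤ 1 / (x + n) + 1 / (y + n) :=
      two_div_le_one_div_add_one_div (by positivity) (by positivity) hz (by linarith)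
    rw [← mul_one_div] at hmean
    push_cast
    rw [← add_assoc, ← add_assoc, ← add_assoc, digamma_add_one (by positivity),
      digamma_add_one (by positivity), digamma_add_one hz]
    linarith

lemma digamma_add_digamma_le {x y z : ℝ} (hx : 0 < x) (hy : 0 < y) (hxyz : x + y ≤ 2 * z)
    (hxz : x ≤ z + 1) (hyz : y ≤ z + 1) : digamma x + digamma y ≤ 2 * digamma z := by
  have hz : 0 < z := by linarith
  have hbound (n : ℕ) : digamma x + digamma y - 2 * digamma z ≤ 2 / (z + n) := by
    have hzn : 0 < z + n := by positivity
    have hmono (w : ℝ) (hw : 0 < w) (hwz : w ≤ z + 1) :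
        digamma (w + n) ≤ digamma (z + n) + 1 / (z + n) := by
      rw [← digamma_add_one hzn]
      exact digamma_le_digamma (by positivity) (by linarith)
    rw [← mul_one_div]
    linarith [digamma_add_digamma_sub_le_add_nat hx hy hxyz n, hmono x hx hxz, hmono y hy hyz]
  have hlim : Tendsto (fun n : ℕ => 2 / (z + n)) atTop (𝓝 0) :=
    tendsto_const_nhds.div_atTop (tendsto_atTop_add_const_left _ z tendsto_natCast_atTop_atTop)
  linarith [ge_of_tendsto' hlim hbound]

theorem stmt_0 (a b : ℝ) (ha : 0 < a) (hb : 0 < b) (hab : a + b ≤ 1) :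
    RamanujanR a b ≥ 4 * Real.log 2 ∧ 4 * Real.log 2 > 2 := by
  have hkey : digamma a + digamma b ≤ 2 * digamma (1 / 2) :=
    digamma_add_digamma_le ha hb (by linarith) (by linarith) (by linarith)
  rw [digamma_one_half] at hkey
  refine ⟨?_, ?_⟩
  · rw [RamanujanR, ge_iff_le]
    linarith
  · linarith [log_two_gt_d9]
end

section
/- Let a, b ∈ (0,1) with a + b ≤ 1, B = Γ(a)Γ(b)/Γ(a+b), and w_n = (a)_n(b)_n/((a+b)_n n!). Define ϑ_n = n·B·w_n·(n+a+b+ab)/(n+a+b) for n ≥ 1. Then the sequence (ϑ_n)_{n≥1} is strictly increasing. -/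
noncomputable def w (a b : ℝ) (n : ℕ) : ℝ :=
  (ascPochhammer ℝ n).eval a * (ascPochhammer ℝ n).eval b /
    ((ascPochhammer ℝ n).eval (a + b) * n.factorial)

noncomputable def ϑ (a b : ℝ) (n : ℕ) : ℝ :=
  n * (Real.Gamma a * Real.Gamma b / Real.Gamma (a + b)) * w a b n *
    (n + a + b + a * b) / (n + a + b)

theorem stmt_2 (a b : ℝ) (ha : a ∈ Set.Ioo (0:ℝ) 1) (hb : b ∈ Set.Ioo (0:ℝ) 1)
    (hab : a + b ≤ 1) :
    ∀ n : ℕ, 1 ≤ n → ϑ a b n < ϑ a b (n + 1) := by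
  obtain ⟨ha0, ha1⟩ := ha
  obtain ⟨hb0, hb1⟩ := hb
  intro n hn
  have hn1 : (1:ℝ) ≤ (n:ℝ) := by exact_mod_cast hn
  have hA : 0 < (ascPochhammer ℝ n).eval a := ascPochhammer_pos n a ha0
  have hB : 0 < (ascPochhammer ℝ n).eval b := ascPochhammer_pos n b hb0
  have hC : 0 < (ascPochhammer ℝ n).eval (a + b) :=
    ascPochhammer_pos n (a + b) (by linarith)
  have hGa : 0 < Real.Gamma a := Real.Gamma_pos_of_pos ha0
  have hGb : 0 < Real.Gamma b := Real.Gamma_pos_of_pos hb0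
  have hGab : 0 < Real.Gamma (a + b) := Real.Gamma_pos_of_pos (by linarith)
  have hfac : 0 < (n.factorial : ℝ) := by exact_mod_cast n.factorial_pos
  set K : ℝ := Real.Gamma a * Real.Gamma b * (ascPochhammer ℝ n).eval a *
      (ascPochhammer ℝ n).eval b /
      (Real.Gamma (a + b) * (ascPochhammer ℝ n).eval (a + b) * n.factorial) with hK
  have hKpos : 0 < K := by positivity
  have hϑn : ϑ a b n = K * ((n:ℝ) * (n + a + b + a * b) / (n + a + b)) := by
    simp only [ϑ, w, hK]
    field_simp
  have hϑn1 : ϑ a b (n + 1) =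
      K * ((a + n) * (b + n) * ((n:ℝ) + 1 + a + b + a * b) /
        ((n + a + b) * ((n:ℝ) + 1 + a + b))) := by
    simp only [ϑ, w, hK, ascPochhammer_succ_eval, Nat.factorial_succ]
    push_cast
    field_simp
    ring
  rw [hϑn, hϑn1]
  have hd1 : (0:ℝ) < n + a + b := by linarith
  have hd2 : (0:ℝ) < (n + a + b) * ((n:ℝ) + 1 + a + b) := by nlinarith
  refine mul_lt_mul_of_pos_left ?_ hKpos
  rw [div_lt_div_iff₀ hd1 hd2]
  nlinarith [mul_pos ha0 hb0, mul_pos (mul_pos ha0 hb0) (show (0:ℝ) < a + b + a*b + 1 by nlinarith), sq_nonneg ((n:ℝ)+a+b)]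
end

section
/- For a, b > 0 with a + b ≤ 1, the quantity S(2) = 4 - ((a+b+2ab)/(a+b))·B(a,b) is strictly negative, where B(a,b) = Γ(a)Γ(b)/Γ(a+b). -/
/-!
Write `s = a + b`. By `Γ(x + 1) = x Γ(x)` the claim becomes
`4ab Γ(s + 1) < (s + 2ab) Γ(a + 1) Γ(b + 1)`. On the left, `Γ ≤ 1` on `[1, 2]` by convexity.
On the right, log-convexity gives `Γ(a + 1) Γ(b + 1) ≥ Γ(s/2 + 1)²`, and the secant of the
convex function `Γ` through `3/2` and `2`, together with `Γ(3/2) = √π/2 ≥ 7/8`, gives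
`Γ(s/2 + 1) ≥ (s + 6)/8`. What remains is a polynomial inequality in `s` and `ab ≤ s²/4`.
-/

open Real Set

namespace Real

lemma Gamma_le_one_of_mem_Icc {x : ℝ} (hx : x ∈ Icc 1 2) : Gamma x ≤ 1 := by
  have h := convexOn_Gamma.le_on_segment (x := 1) (y := 2) (by norm_num) (by norm_num)
    (by rwa [segment_eq_Icc (by norm_num)])
  simpa [Gamma_one, Gamma_two] using h

lemma Gamma_midpoint_sq_le_mul {x y : ℝ} (hx : 0 < x) (hy : 0 < y) :
    Gamma ((x + y) / 2) ^ 2 ≤ Gamma x * Gamma y := by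
  have h := Gamma_mul_add_mul_le_rpow_Gamma_mul_rpow_Gamma hx hy (a := 1 / 2) (b := 1 / 2)
    (by norm_num) (by norm_num) (by norm_num)
  rw [← sqrt_eq_rpow, ← sqrt_eq_rpow, ← sqrt_mul (Gamma_pos_of_pos hx).le,
    show 1 / 2 * x + 1 / 2 * y = (x + y) / 2 by ring] at h
  calc Gamma ((x + y) / 2) ^ 2 ≤ sqrt (Gamma x * Gamma y) ^ 2 :=
        pow_le_pow_left₀ (Gamma_pos_of_pos (by positivity)).le h 2
    _ = Gamma x * Gamma y :=
        sq_sqrt (mul_pos (Gamma_pos_of_pos hx) (Gamma_pos_of_pos hy)).le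

lemma seven_div_eight_le_Gamma_three_div_two : 7 / 8 ≤ Gamma (3 / 2) := by
  have hsqrt : 7 / 4 ≤ sqrt π :=
    le_sqrt_of_sq_le (by nlinarith [pi_gt_d2])
  rw [show (3 / 2 : ℝ) = 1 / 2 + 1 by norm_num, Gamma_add_one (by norm_num), Gamma_one_half_eq]
  linarith

lemma add_two_div_four_le_Gamma {x : ℝ} (hx : 0 < x) (hx' : x ≤ 3 / 2) :
    (x + 2) / 4 ≤ Gamma x := by
  have h32 := seven_div_eight_le_Gamma_three_div_two
  rcases hx'.lt_or_eq with hlt | rfl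
  · have hslope := convexOn_Gamma.slope_mono_adjacent (mem_Ioi.mpr hx)
      (show (2 : ℝ) ∈ Ioi 0 by norm_num) hlt (by norm_num : (3 / 2 : ℝ) < 2)
    rw [Gamma_two, div_le_div_iff₀ (by linarith) (by norm_num)] at hslope
    nlinarith
  · linarith

end Real

lemma four_mul_lt_of_le_sq_div_four {s p : ℝ} (hs : 0 < s) (hs1 : s ≤ 1)
    (hp : p ≤ s ^ 2 / 4) :
    4 * p < (s + 2 * p) * ((s + 6) / 8) ^ 2 := by
  have hq : ((s + 6) / 8) ^ 2 < 2 := by nlinarith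
  have hcubic : 0 < 72 - 68 * s + 14 * s ^ 2 + s ^ 3 := by nlinarith
  nlinarith [mul_le_mul_of_nonneg_left hp (by linarith : (0 : ℝ) ≤ 2 - ((s + 6) / 8) ^ 2)]

theorem stmt_4 (a b : ℝ) (ha : 0 < a) (hb : 0 < b) (hab : a + b ≤ 1) :
    4 - ((a + b + 2 * a * b) / (a + b)) *
      (Real.Gamma a * Real.Gamma b / Real.Gamma (a + b)) < 0 := by
  have hs : 0 < a + b := by linarith
  have hGs : Gamma (a + b + 1) ≤ 1 := Gamma_le_one_of_mem_Icc ⟨by linarith, by linarith⟩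
  have hmid : Gamma ((a + b) / 2 + 1) ^ 2 ≤ Gamma (a + 1) * Gamma (b + 1) := by
    simpa [show (a + 1 + (b + 1)) / 2 = (a + b) / 2 + 1 by ring] using
      Gamma_midpoint_sq_le_mul (x := a + 1) (y := b + 1) (by linarith) (by linarith)
  have hsec : (a + b + 6) / 8 ≤ Gamma ((a + b) / 2 + 1) := by
    simpa [show ((a + b) / 2 + 1 + 2) / 4 = (a + b + 6) / 8 by ring] using
      add_two_div_four_le_Gamma (x := (a + b) / 2 + 1) (by positivity) (by linarith)
  have hpoly := four_mul_lt_of_le_sq_div_four hs hab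
    (show a * b ≤ (a + b) ^ 2 / 4 by nlinarith [sq_nonneg (a - b)])
  have key : 4 * (a * b) * Gamma (a + b + 1) <
      (a + b + 2 * (a * b)) * (Gamma (a + 1) * Gamma (b + 1)) :=
    calc 4 * (a * b) * Gamma (a + b + 1) ≤ 4 * (a * b) :=
        mul_le_of_le_one_right (by positivity) hGs
      _ < (a + b + 2 * (a * b)) * ((a + b + 6) / 8) ^ 2 := hpoly
      _ ≤ (a + b + 2 * (a * b)) * (Gamma (a + 1) * Gamma (b + 1)) := by
        gcongr
        exact (pow_le_pow_left₀ (by positivity) hsec 2).trans hmid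
  rw [Gamma_add_one ha.ne', Gamma_add_one hb.ne', Gamma_add_one hs.ne'] at key
  have hGa := Gamma_pos_of_pos ha
  have hGb := Gamma_pos_of_pos hb
  have hGab := Gamma_pos_of_pos hs
  rw [sub_neg, div_mul_div_comm, lt_div_iff₀ (by positivity)]
  nlinarith [mul_pos ha hb]
end

section
/- For all x, y ∈ (0,1), the Beta function satisfies B(x,y) > ((x+y)/(xy))·(1 - 2xy/(x+y+1)). -/
/-!
Write `P = t ^ (x - 1)` and `Q = (1 - t) ^ (y - 1)`. Strong concavity of `u ↦ u ^ a` on `(0, 1]`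
gives `P - 1 ≥ (1 - x)(1 - t) P + x(1 - x)(1 - t)² / 2`, and symmetrically for `Q`. Multiplying
the two bounds, using `P, Q ≥ 1`, and integrating over `(0, 1)` yields
`B(x, y) - (1 - x)(1 - y) B(x + 1, y + 1) ≥ 1/x + 1/y - 1 + (1 - x)(1 - y)(x + y)/24`.
Since `B(x + 1, y + 1) = xy / ((x + y)(x + y + 1)) · B(x, y)`, the claim reduces to the
positivity of a polynomial in `x` and `y`.
-/

open Real intervalIntegral ProbabilityTheory Set
open MeasureTheory (volume)

theorem one_add_le_mul_rpow_sub_one_add_mul_rpow {a t : ℝ} (ha0 : 0 ≤ a) (ha1 : a ≤ 1)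
    (ht0 : 0 < t) (ht1 : t ≤ 1) :
    1 + a * (1 - a) * (1 - t) ^ 2 / 2 ≤ a * t ^ (a - 1) + (1 - a) * t ^ a := by
  set φ : ℝ → ℝ := fun u => a * u ^ (a - 1) + (1 - a) * u ^ a - a * (1 - a) * (1 - u) ^ 2 / 2
  have hφ' : ∀ u ∈ Icc t 1, HasDerivAt φ (a * (1 - a) * (1 - u) * (1 - u ^ (a - 2))) u := by
    intro u hu
    have hu0 : u ≠ 0 := (ht0.trans_le hu.1).ne'
    have h := (((hasDerivAt_rpow_const (p := a - 1) (Or.inl hu0)).const_mul a).add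
      ((hasDerivAt_rpow_const (p := a) (Or.inl hu0)).const_mul (1 - a))).sub
      ((((hasDerivAt_id u).const_sub 1).pow 2).const_mul (a * (1 - a)) |>.div_const 2)
    refine h.congr_deriv ?_
    rw [show a - 1 - 1 = a - 2 by ring, show a - 1 = a - 2 + 1 by ring, rpow_add_one hu0]
    simp only [Nat.cast_ofNat, id_eq, Nat.add_one_sub_one, pow_one, mul_neg, mul_one]
    ring
  have hanti : AntitoneOn φ (Icc t 1) := by
    refine antitoneOn_of_hasDerivWithinAt_nonpos (convex_Icc t 1)
      (fun u hu => (hφ' u hu).continuousAt.continuousWithinAt)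
      (fun u hu => (hφ' u (interior_subset hu)).hasDerivWithinAt) fun u hu => ?_
    rw [interior_Icc] at hu
    have hpow : 1 ≤ u ^ (a - 2) :=
      one_le_rpow_of_pos_of_le_one_of_nonpos (ht0.trans hu.1) hu.2.le (by linarith)
    have hcoef : 0 ≤ a * (1 - a) * (1 - u) :=
      mul_nonneg (mul_nonneg ha0 (sub_nonneg.2 ha1)) (sub_nonneg.2 hu.2.le)
    nlinarith
  have hφ1 : φ 1 = 1 := by simp [φ]
  have h := hanti (left_mem_Icc.2 ht1) (right_mem_Icc.2 ht1) ht1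
  rw [hφ1] at h
  simp only [φ] at h
  linarith

theorem le_rpow_sub_one_sub_one {a t : ℝ} (ha0 : 0 ≤ a) (ha1 : a ≤ 1) (ht0 : 0 < t)
    (ht1 : t ≤ 1) :
    (1 - a) * (1 - t) * t ^ (a - 1) + a * (1 - a) * (1 - t) ^ 2 / 2 ≤ t ^ (a - 1) - 1 := by
  have h := one_add_le_mul_rpow_sub_one_add_mul_rpow ha0 ha1 ht0 ht1
  rw [show t ^ a = t ^ (a - 1) * t by rw [← rpow_add_one ht0.ne', sub_add_cancel]] at h
  linarith

theorem beta_integrand_lower_bound {x y t : ℝ} (hx0 : 0 ≤ x) (hx1 : x ≤ 1) (hy0 : 0 ≤ y)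
    (hy1 : y ≤ 1) (ht : t ∈ Ioo (0 : ℝ) 1) :
    t ^ (x - 1) + (1 - t) ^ (y - 1) - 1
        + (1 - x) * (1 - y) / 2 * (y * t ^ 2 * (1 - t) + x * t * (1 - t) ^ 2)
      ≤ t ^ (x - 1) * (1 - t) ^ (y - 1) - (1 - x) * (1 - y) * (t ^ x * (1 - t) ^ y) := by
  obtain ⟨ht0, ht1⟩ := ht
  have ht0' : 0 < 1 - t := sub_pos.2 ht1
  have hA := le_rpow_sub_one_sub_one hx0 hx1 ht0 ht1.le
  have hB := le_rpow_sub_one_sub_one hy0 hy1 ht0' (by linarith)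
  rw [sub_sub_cancel] at hB
  rw [show t ^ x = t * t ^ (x - 1) by rw [rpow_sub_one ht0.ne']; field_simp,
    show (1 - t) ^ y = (1 - t) * (1 - t) ^ (y - 1) by rw [rpow_sub_one ht0'.ne']; field_simp]
  have hA1 : 1 ≤ t ^ (x - 1) := one_le_rpow_of_pos_of_le_one_of_nonpos ht0 ht1.le (by linarith)
  have hB1 : 1 ≤ (1 - t) ^ (y - 1) :=
    one_le_rpow_of_pos_of_le_one_of_nonpos ht0' (by linarith) (by linarith)
  set A := t ^ (x - 1)
  set B := (1 - t) ^ (y - 1)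
  have hP : 0 ≤ (1 - x) * (1 - t) * A + x * (1 - x) * (1 - t) ^ 2 / 2 := by positivity
  have hQ : 0 ≤ (1 - y) * t * B + y * (1 - y) * t ^ 2 / 2 := by positivity
  have hPQ := mul_le_mul hA hB hQ (hP.trans hA)
  have hcA : 0 ≤ (1 - x) * (1 - t) * y * (1 - y) * t ^ 2 / 2 * (A - 1) := by
    have := sub_nonneg.2 hA1; positivity
  have hcB : 0 ≤ x * (1 - x) * (1 - t) ^ 2 * (1 - y) * t / 2 * (B - 1) := by
    have := sub_nonneg.2 hB1; positivity
  have hc : 0 ≤ x * (1 - x) * y * (1 - y) * (1 - t) ^ 2 * t ^ 2 / 4 := by positivity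
  linarith

theorem integral_rpow_sub_one {u : ℝ} (hu : 0 < u) :
    ∫ t in (0 : ℝ)..1, t ^ (u - 1) = 1 / u := by
  rw [integral_rpow (Or.inl (by linarith)), sub_add_cancel, one_rpow, zero_rpow hu.ne', sub_zero]

theorem integral_one_sub_rpow_sub_one {u : ℝ} (hu : 0 < u) :
    ∫ t in (0 : ℝ)..1, (1 - t) ^ (u - 1) = 1 / u := by
  rw [integral_comp_sub_left (fun s => s ^ (u - 1)), sub_self, sub_zero, integral_rpow_sub_one hu]

theorem intervalIntegrable_one_sub_rpow {r : ℝ} (hr : -1 < r) :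
    IntervalIntegrable (fun t => (1 - t) ^ r) volume 0 1 := by
  simpa using ((intervalIntegrable_rpow' hr (a := 0) (b := 1)).comp_sub_left 1).symm

theorem integral_sq_mul_one_sub_add_mul_one_sub_sq (x y : ℝ) :
    ∫ t in (0 : ℝ)..1, (y * t ^ 2 * (1 - t) + x * t * (1 - t) ^ 2) = (x + y) / 12 := by
  have h : ∀ t : ℝ, y * t ^ 2 * (1 - t) + x * t * (1 - t) ^ 2
      = x * t + (y - 2 * x) * t ^ 2 + (x - y) * t ^ 3 := fun t => by ring
  simp only [h]
  rw [integral_add, integral_add, integral_const_mul, integral_const_mul, integral_const_mul]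
  · simp only [integral_id, integral_pow]
    ring
  all_goals exact Continuous.intervalIntegrable (by fun_prop) _ _

theorem beta_eq_integral {u v : ℝ} (hu : 0 < u) (hv : 0 < v) :
    beta u v = ∫ t in (0 : ℝ)..1, t ^ (u - 1) * (1 - t) ^ (v - 1) := by
  rw [beta_eq_betaIntegralReal u v hu hv, Complex.betaIntegral,
    ← Complex.ofReal_re (∫ t in _.._, _), ← integral_ofReal]
  congr 1
  refine integral_congr fun t ht => ?_
  rw [uIcc_of_le zero_le_one] at ht
  push_cast
  rw [Complex.ofReal_cpow ht.1, Complex.ofReal_cpow (sub_nonneg.2 ht.2)]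
  push_cast
  ring_nf

theorem intervalIntegrable_beta_integrand {u v : ℝ} (hu : 0 < u) (hv : 0 < v) :
    IntervalIntegrable (fun t => t ^ (u - 1) * (1 - t) ^ (v - 1)) volume 0 1 :=
  intervalIntegrable_of_integral_ne_zero (beta_eq_integral hu hv ▸ (beta_pos hu hv).ne')

theorem beta_add_one_add_one {u v : ℝ} (hu : 0 < u) (hv : 0 < v) :
    beta (u + 1) (v + 1) = u * v / ((u + v) * (u + v + 1)) * beta u v := by
  have huv : 0 < u + v := add_pos hu hv
  rw [beta, beta, Gamma_add_one hu.ne', Gamma_add_one hv.ne',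
    show u + 1 + (v + 1) = u + v + 1 + 1 by ring, Gamma_add_one (by positivity),
    Gamma_add_one huv.ne']
  field_simp

theorem le_beta_sub_mul_beta_add_one_add_one {x y : ℝ} (hx0 : 0 < x) (hx1 : x ≤ 1)
    (hy0 : 0 < y) (hy1 : y ≤ 1) :
    1 / x + 1 / y - 1 + (1 - x) * (1 - y) * (x + y) / 24
      ≤ beta x y - (1 - x) * (1 - y) * beta (x + 1) (y + 1) := by
  have hbeta₁ := beta_eq_integral (add_pos hx0 one_pos) (add_pos hy0 one_pos)
  have hint₁ := intervalIntegrable_beta_integrand (add_pos hx0 one_pos) (add_pos hy0 one_pos)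
  simp only [add_sub_cancel_right] at hbeta₁ hint₁
  have hint := intervalIntegrable_beta_integrand hx0 hy0
  have hA := intervalIntegrable_rpow' (a := 0) (b := 1) (by linarith : -1 < x - 1)
  have hB := intervalIntegrable_one_sub_rpow (by linarith : -1 < y - 1)
  have hAB1 := (hA.add hB).sub (intervalIntegrable_const (c := (1 : ℝ)))
  have hC : IntervalIntegrable (fun t : ℝ => (1 - x) * (1 - y) / 2
      * (y * t ^ 2 * (1 - t) + x * t * (1 - t) ^ 2)) volume 0 1 :=
    Continuous.intervalIntegrable (by fun_prop) _ _
  have h := integral_mono_on_of_le_Ioo (μ := volume) zero_le_one (hAB1.add hC)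
    (hint.sub (hint₁.const_mul _)) fun t ht => beta_integrand_lower_bound hx0.le hx1 hy0.le hy1 ht
  rw [integral_add hAB1 hC, integral_sub (hA.add hB) intervalIntegrable_const,
    integral_add hA hB, integral_sub hint (hint₁.const_mul _), integral_const_mul,
    integral_const_mul, integral_sq_mul_one_sub_add_mul_one_sub_sq, integral_rpow_sub_one hx0,
    integral_one_sub_rpow_sub_one hy0, ← hbeta₁, ← beta_eq_integral hx0 hy0, integral_one] at h
  convert h using 2 <;> ring

theorem beta_bound_numerator_pos {x y : ℝ} (hx : x ∈ Ioo (0 : ℝ) 1) (hy : y ∈ Ioo (0 : ℝ) 1) :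
    0 < (1 - x) * (1 - y) * (x + y) * (x + y + 1) ^ 2 / 24
      + x * y * (3 * (x + y) - 1 - 2 * (x * y)) := by
  obtain ⟨hx0, hx1⟩ := hx
  obtain ⟨hy0, hy1⟩ := hy
  have hx1' : 0 < 1 - x := by linarith
  have hy1' : 0 < 1 - y := by linarith
  have hfirst : 0 < (1 - x) * (1 - y) * (x + y) * (x + y + 1) ^ 2 / 24 := by positivity
  rcases le_or_gt (1 + 2 * (x * y)) (3 * (x + y)) with h | h
  · have : 0 ≤ 3 * (x + y) - 1 - 2 * (x * y) := by linarith
    have : 0 ≤ x * y * (3 * (x + y) - 1 - 2 * (x * y)) := by positivity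
    linarith
  · have hs : x + y < 2 / 5 := by nlinarith [sq_nonneg (x - y)]
    nlinarith [sq_nonneg (x - y), mul_pos hx0 hy0, mul_pos hx1' hy1',
      mul_nonneg (mul_nonneg hx0.le hy0.le) (sq_nonneg (x - y)),
      mul_nonneg (mul_nonneg (mul_nonneg hx0.le hy0.le) (sq_nonneg (x - y))) (add_pos hx0 hy0).le,
      mul_pos (mul_pos hx0 hy0) (mul_pos hx0 hy0),
      mul_nonneg (mul_nonneg (mul_pos hx0 hy0).le (add_pos hx0 hy0).le) (sub_nonneg.2 hs.le)]

theorem lt_of_le_sub_mul_beta_ratio {x y B : ℝ} (hx : x ∈ Ioo (0 : ℝ) 1)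
    (hy : y ∈ Ioo (0 : ℝ) 1)
    (h : 1 / x + 1 / y - 1 + (1 - x) * (1 - y) * (x + y) / 24
      ≤ B - (1 - x) * (1 - y) * (x * y / ((x + y) * (x + y + 1)) * B)) :
    (x + y) / (x * y) * (1 - 2 * x * y / (x + y + 1)) < B := by
  obtain ⟨hx0, hx1⟩ := hx
  obtain ⟨hy0, hy1⟩ := hy
  have hk : (1 - x) * (1 - y) * (x * y / ((x + y) * (x + y + 1))) < 1 := by
    have h₁ : (1 - x) * (1 - y) < 1 := by nlinarith
    have h₂ : x * y / ((x + y) * (x + y + 1)) < 1 := by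
      rw [div_lt_one (by positivity)]; nlinarith
    exact mul_lt_one_of_nonneg_of_lt_one_left (by nlinarith) h₁ h₂.le
  have hgap : 0 < 1 / x + 1 / y - 1 + (1 - x) * (1 - y) * (x + y) / 24
      - (x + y) / (x * y) * (1 - 2 * x * y / (x + y + 1))
        * (1 - (1 - x) * (1 - y) * (x * y / ((x + y) * (x + y + 1)))) := by
    refine (div_pos (beta_bound_numerator_pos ⟨hx0, hx1⟩ ⟨hy0, hy1⟩)
      (by positivity : (0 : ℝ) < (x + y + 1) ^ 2)).trans_eq ?_
    field_simp
    ring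
  exact lt_of_mul_lt_mul_right (by linarith) (sub_nonneg.2 hk.le)

theorem stmt_5 (x y : ℝ) (hx : x ∈ Set.Ioo (0:ℝ) 1) (hy : y ∈ Set.Ioo (0:ℝ) 1) :
    Real.Gamma x * Real.Gamma y / Real.Gamma (x + y) >
      ((x + y) / (x * y)) * (1 - 2 * x * y / (x + y + 1)) := by
  have h := le_beta_sub_mul_beta_add_one_add_one hx.1 hx.2.le hy.1 hy.2.le
  rw [beta_add_one_add_one hx.1 hy.1] at h
  exact lt_of_le_sub_mul_beta_ratio hx hy h
end
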